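/- arXiv:1112.5896 — 3 statements merged into one kernel-verified Lean document; each statement's English description precedes it below -/
import Mathlib

section
/- Let A be a basic artin algebra and S a simple projective A-module. If I is an indecomposable injective A-module not isomorphic to the injective envelope I₀(S) of S, then Hom_A(I, I₀(S)) = 0. -/
open MulOpposite

/-- An indecomposable module. -/
def IsIndecomposableModule (A : Type) [Ring A] (M : Type) [AddCommGroup M] [Module A M] : Prop :=
  Nontrivial M ∧ ∀ N N' : Submodule A M, IsCompl N N' → N = ⊥ ∨ N' = ⊥

/-- Projective dimension at most `n`. -/
def pdLE (A : Type) [Ring A] : ℕ → (M : Type) → [AddCommGroup M] → [Module A M] → Prop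
  | 0, M, _, _ => Module.Projective A M
  | n+1, M, _, _ =>
      ∃ (P : Type) (_ : AddCommGroup P) (_ : Module A P) (f : P →ₗ[A] M),
        Module.Projective A P ∧ Function.Surjective f ∧ pdLE A n (LinearMap.ker f)

/-- Global dimension (on finitely generated modules) at most `n`. -/
def gldimLE (A : Type) [Ring A] (n : ℕ) : Prop :=
  ∀ (M : Type) [AddCommGroup M] [Module A M], Module.Finite A M → pdLE A n M

/-- `i : S →ₗ[A] E` exhibits `E` as an injective envelope of `S`. -/
structure IsInjectiveEnvelope (A : Type) [Ring A] {S E : Type}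
    [AddCommGroup S] [Module A S] [AddCommGroup E] [Module A E]
    (i : S →ₗ[A] E) : Prop where
  injective_module : Module.Injective A E
  inj : Function.Injective i
  essential : ∀ N : Submodule A E, N ≠ ⊥ → N ⊓ LinearMap.range i ≠ ⊥

/-- A basic algebra: indecomposable projective direct summands of the regular module
are pairwise nonisomorphic. -/
def IsBasicAlgebra (A : Type) [Ring A] : Prop :=
  ∀ P Q : Submodule A A, (∃ P', IsCompl P P') → (∃ Q', IsCompl Q Q') →
    IsIndecomposableModule A P → IsIndecomposableModule A Q →
    Nonempty (P ≃ₗ[A] Q) → P = Q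

/-- `M` is a direct summand of a finite direct sum of copies of `P`. -/
def IsInAdd (A : Type) [Ring A] (P : Type) [AddCommGroup P] [Module A P]
    (M : Type) [AddCommGroup M] [Module A M] : Prop :=
  ∃ (n : ℕ) (f : M →ₗ[A] (Fin n → P)) (g : (Fin n → P) →ₗ[A] M),
    g ∘ₗ f = LinearMap.id

/-- An almost split (Auslander–Reiten) sequence `0 → N → E → X → 0`. -/
def IsAlmostSplitSequence (A : Type) [Ring A] {N E X : Type}
    [AddCommGroup N] [Module A N] [AddCommGroup E] [Module A E]
    [AddCommGroup X] [Module A X]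
    (f : N →ₗ[A] E) (g : E →ₗ[A] X) : Prop :=
  Function.Injective f ∧ Function.Surjective g ∧
    LinearMap.range f = LinearMap.ker g ∧
    (¬ ∃ s : X →ₗ[A] E, g ∘ₗ s = LinearMap.id) ∧
    IsIndecomposableModule A N ∧ IsIndecomposableModule A X ∧
    (∀ (Y : Type) [AddCommGroup Y] [Module A Y] (h : Y →ₗ[A] X),
      (¬ ∃ s : X →ₗ[A] Y, h ∘ₗ s = LinearMap.id) → ∃ h' : Y →ₗ[A] E, g ∘ₗ h' = h)

/-- `M` is an inverse Auslander–Reiten translate of `N`. -/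
def IsTauInverseOf (A : Type) [Ring A] (N : Type) [AddCommGroup N] [Module A N]
    (M : Type) [AddCommGroup M] [Module A M] : Prop :=
  ∃ (E : Type) (_ : AddCommGroup E) (_ : Module A E)
    (f : N →ₗ[A] E) (g : E →ₗ[A] M), IsAlmostSplitSequence A f g

/-- `N` is an Auslander–Reiten translate of `M`. -/
def IsTauOf (A : Type) [Ring A] (M : Type) [AddCommGroup M] [Module A M]
    (N : Type) [AddCommGroup N] [Module A N] : Prop :=
  ∃ (E : Type) (_ : AddCommGroup E) (_ : Module A E)
    (f : N →ₗ[A] E) (g : E →ₗ[A] M), IsAlmostSplitSequence A f g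

/-- A tilting module (Bongartz characterization). -/
def IsTiltingModule (A : Type) [Ring A] (T : Type) [AddCommGroup T] [Module A T] : Prop :=
  pdLE A 1 T ∧
  (∀ (X : Type) [AddCommGroup X] [Module A X] (f : T →ₗ[A] X) (g : X →ₗ[A] T),
      Function.Injective f → Function.Surjective g → LinearMap.range f = LinearMap.ker g →
      ∃ s : T →ₗ[A] X, g ∘ₗ s = LinearMap.id) ∧
  (∃ (T₀ T₁ : Type) (_ : AddCommGroup T₀) (_ : Module A T₀)
      (_ : AddCommGroup T₁) (_ : Module A T₁)
      (i : A →ₗ[A] T₀) (p : T₀ →ₗ[A] T₁),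
      IsInAdd A T T₀ ∧ IsInAdd A T T₁ ∧
      Function.Injective i ∧ Function.Surjective p ∧ LinearMap.range i = LinearMap.ker p)

/-- A basic (multiplicity-free) module. -/
def IsBasicModule (A : Type) [Ring A] (M : Type) [AddCommGroup M] [Module A M] : Prop :=
  ∀ (X Y : Type) (_ : AddCommGroup X) (_ : Module A X) (_ : AddCommGroup Y) (_ : Module A Y),
    IsIndecomposableModule A X → ¬ Nonempty (M ≃ₗ[A] (X × X × Y))

/-- The socle of a module. -/
def socl (A : Type) [Ring A] (M : Type) [AddCommGroup M] [Module A M] : Submodule A M :=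
  sSup {N : Submodule A M | IsAtom N}

/-!
A nonzero `f : I → E` has image meeting, hence containing, the simple essential socle `i(S)` of
`E`, so projectivity of `S` lifts `i` through `f` to a monomorphism `S → I`. Extending it along
`i` by injectivity of `I` gives `h : E → I` that is injective on the essential submodule `i(S)`,
hence injective. As `E` is injective, `h` splits, and indecomposability of `I` makes it an
isomorphism.
-/

open Function

theorem Module.exists_comp_eq_of_range_le {A P M N : Type} [Ring A]
    [AddCommGroup P] [Module A P] [AddCommGroup M] [Module A M] [AddCommGroup N] [Module A N]
    [Module.Projective A P] (f : M →ₗ[A] N) (g : P →ₗ[A] N)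
    (hgf : LinearMap.range g ≤ LinearMap.range f) : ∃ s : P →ₗ[A] M, f ∘ₗ s = g := by
  obtain ⟨s, hs⟩ := Module.projective_lifting_property f.rangeRestrict
    (g.codRestrict _ fun x => hgf ⟨x, rfl⟩) f.surjective_rangeRestrict
  exact ⟨s, LinearMap.ext fun x => congrArg Subtype.val (LinearMap.congr_fun hs x)⟩

namespace IsInjectiveEnvelope

variable {A S E : Type} [Ring A] [AddCommGroup S] [Module A S] [AddCommGroup E] [Module A E]
  {i : S →ₗ[A] E}

theorem range_le_of_ne_bot [IsSimpleModule A S] (hE : IsInjectiveEnvelope A i)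
    {N : Submodule A E} (hN : N ≠ ⊥) : LinearMap.range i ≤ N := by
  have hatom : IsAtom (LinearMap.range i) :=
    isSimpleModule_iff_isAtom.mp (.congr (LinearEquiv.ofInjective i hE.inj).symm)
  rw [← hatom.not_disjoint_iff_le, disjoint_iff, inf_comm]
  exact hE.essential N hN

theorem injective_of_injective_comp {M : Type} [AddCommGroup M] [Module A M]
    (hE : IsInjectiveEnvelope A i) {g : E →ₗ[A] M} (hg : Injective (g ∘ₗ i)) : Injective g := by
  rw [← LinearMap.ker_eq_bot]
  by_contra hker
  refine hE.essential _ hker (eq_bot_iff.mpr ?_)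
  rintro _ ⟨hx, s, rfl⟩
  have hs : s = 0 := hg (by simpa using hx)
  simp [hs]

end IsInjectiveEnvelope

theorem IsIndecomposableModule.bijective_of_comp_eq_id {A E I : Type} [Ring A]
    [AddCommGroup E] [Module A E] [Nontrivial E] [AddCommGroup I] [Module A I]
    (hI : IsIndecomposableModule A I) {h : E →ₗ[A] I} {g : I →ₗ[A] E}
    (hgh : g ∘ₗ h = LinearMap.id) : Bijective h := by
  have hgh' (x : E) : g (h x) = x := LinearMap.congr_fun hgh x
  have hidem : IsIdempotentElem (h ∘ₗ g) := LinearMap.ext fun y => by simp [hgh']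
  rcases hI.2 _ _ (LinearMap.IsIdempotentElem.isCompl hidem) with hrange | hker
  · obtain ⟨x, hx⟩ := exists_ne (0 : E)
    have hhx : h x ∈ LinearMap.range (h ∘ₗ g) := ⟨h x, by simp [hgh']⟩
    rw [hrange, Submodule.mem_bot] at hhx
    exact absurd (by simpa [hhx] using (hgh' x).symm) hx
  · have hg : Injective g :=
      .of_comp (f := h) (LinearMap.ker_eq_bot.mp hker : Injective (h ∘ₗ g))
    exact ⟨.of_comp (f := g) fun x y hxy => by simpa [hgh'] using hxy,
      fun y => ⟨g y, hg (hgh' (g y))⟩⟩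

theorem hom_indec_injective_to_envelope_of_simple_projective_eq_zero_general
    (A : Type) [Ring A]
    (S : Type) [AddCommGroup S] [Module A S]
    (hS : IsSimpleModule A S) (hSproj : Module.Projective A S)
    (E : Type) [AddCommGroup E] [Module A E]
    (i : S →ₗ[A] E) (hE : IsInjectiveEnvelope A i)
    (I : Type) [AddCommGroup I] [Module A I]
    (hIinj : Module.Injective A I) (hIindec : IsIndecomposableModule A I)
    (hne : IsEmpty (I ≃ₗ[A] E)) :
    ∀ f : I →ₗ[A] E, f = 0 := by
  intro f
  by_contra hf
  have := hS
  have := hSproj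
  have := IsSimpleModule.nontrivial A S
  have : Nontrivial E := hE.inj.nontrivial
  obtain ⟨s, hfs⟩ := Module.exists_comp_eq_of_range_le f i
    (hE.range_le_of_ne_bot (mt LinearMap.range_eq_bot.mp hf))
  have hs : Injective s := .of_comp (f := f) (by rw [← LinearMap.coe_comp, hfs]; exact hE.inj)
  obtain ⟨h, hhi⟩ := hIinj.out i hE.inj s
  have hh : Injective h :=
    hE.injective_of_injective_comp (g := h) (by rwa [show h ∘ₗ i = s from LinearMap.ext hhi])
  obtain ⟨g, hgh⟩ := hE.injective_module.out h hh LinearMap.id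
  exact hne.false (.symm (.ofBijective h (hIindec.bijective_of_comp_eq_id (LinearMap.ext hgh))))

/-- Over a basic artin algebra `A`, if `S` is a simple projective module,
`E` an injective envelope of `S` and `I` an indecomposable injective module not isomorphic
to `E`, then `Hom_A(I, E) = 0`. -/
theorem hom_indec_injective_to_envelope_of_simple_projective_eq_zero
    (R A : Type) [CommRing R] [IsArtinianRing R] [Ring A] [Algebra R A] [Module.Finite R A]
    (hbasic : IsBasicAlgebra A)
    (S : Type) [AddCommGroup S] [Module A S]
    (hS : IsSimpleModule A S) (hSproj : Module.Projective A S)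
    (E : Type) [AddCommGroup E] [Module A E]
    (i : S →ₗ[A] E) (hE : IsInjectiveEnvelope A i)
    (I : Type) [AddCommGroup I] [Module A I] [Module.Finite A I]
    (hIinj : Module.Injective A I) (hIindec : IsIndecomposableModule A I)
    (hne : IsEmpty (I ≃ₗ[A] E)) :
    ∀ f : I →ₗ[A] E, f = 0 :=
  hom_indec_injective_to_envelope_of_simple_projective_eq_zero_general A S hS hSproj E i hE I hIinj
    hIindec hne
end

section
/- Let A be a basic artin algebra and S a simple projective A-module. Then the endomorphism ring End_A(I₀(S)) of the injective envelope of S is isomorphic to End_A(S). -/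
open MulOpposite

theorem aux_end_equiv
    (A : Type) [Ring A]
    (S : Type) [AddCommGroup S] [Module A S]
    (hS : IsSimpleModule A S) (hSproj : Module.Projective A S)
    (E : Type) [AddCommGroup E] [Module A E]
    (i : S →ₗ[A] E) (hE : IsInjectiveEnvelope A i) :
    Nonempty ((Module.End A E) ≃+* (Module.End A S)) := by
  haveI : Nontrivial S := IsSimpleModule.nontrivial A S
  set e := LinearEquiv.ofInjective i hE.inj with he
  have hie : ∀ y : LinearMap.range i, i (e.symm y) = (y : E) := by
    intro y
    conv_rhs => rw [← e.apply_symm_apply y]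
    rw [he, LinearEquiv.ofInjective_apply]
  -- every endomorphism of E maps range i into range i
  have key : ∀ f : Module.End A E, ∀ s : S, f (i s) ∈ LinearMap.range i := by
    intro f s
    rcases eq_bot_or_eq_top (LinearMap.ker (f ∘ₗ i)) with hk | hk
    · rcases eq_bot_or_eq_top (Submodule.comap (f ∘ₗ i) (LinearMap.range i)) with hN | hN
      · exfalso
        have hrne : LinearMap.range (f ∘ₗ i) ≠ ⊥ := by
          intro h
          obtain ⟨s₀, hs₀⟩ := exists_ne (0 : S)
          have : f (i s₀) = 0 := by
            have : (f ∘ₗ i) s₀ ∈ LinearMap.range (f ∘ₗ i) := LinearMap.mem_range_self _ _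
            rw [h] at this
            simpa using this
          have : s₀ ∈ LinearMap.ker (f ∘ₗ i) := by simpa using this
          rw [hk] at this
          exact hs₀ ((Submodule.mem_bot A).mp this)
        have := hE.essential _ hrne
        rw [Submodule.ne_bot_iff] at this
        obtain ⟨x, ⟨⟨s', hs'⟩, hxr⟩, hx0⟩ := this
        have : s' ∈ Submodule.comap (f ∘ₗ i) (LinearMap.range i) := by
          simpa using hs' ▸ hxr
        rw [hN] at this
        have : s' = 0 := (Submodule.mem_bot A).mp this
        exact hx0 (by rw [← hs', this]; simp)
      · have : s ∈ Submodule.comap (f ∘ₗ i) (LinearMap.range i) := by rw [hN]; trivial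
        simpa using this
    · have : s ∈ LinearMap.ker (f ∘ₗ i) := by rw [hk]; trivial
      simp only [LinearMap.mem_ker, LinearMap.comp_apply] at this
      rw [this]
      exact Submodule.zero_mem _
  -- the restriction map
  let φ : Module.End A E → Module.End A S := fun f =>
    e.symm.toLinearMap ∘ₗ LinearMap.codRestrict (LinearMap.range i) (f ∘ₗ i) (key f)
  have hφ : ∀ (f : Module.End A E) (s : S), i (φ f s) = f (i s) := by
    intro f s
    simp only [φ, LinearMap.comp_apply, LinearEquiv.coe_coe]
    rw [hie]
    rfl
  have hinj : Function.Injective φ := by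
    intro f g hfg
    have hzero : ∀ s : S, f (i s) = g (i s) := by
      intro s
      rw [← hφ, ← hφ, hfg]
    -- reduce to: an endo vanishing on range i is 0
    set d : Module.End A E := f - g with hd
    have hdz : ∀ s : S, d (i s) = 0 := by
      intro s; simp [hd, LinearMap.sub_apply, hzero s]
    have : d = 0 := by
      by_contra hne
      have hrne : LinearMap.range d ≠ ⊥ := by
        intro h
        apply hne
        ext x
        have : d x ∈ LinearMap.range d := LinearMap.mem_range_self _ _
        rw [h] at this
        simpa using this
      -- range i ≤ range d
      have hle : ∀ s : S, i s ∈ LinearMap.range d := by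
        have := hE.essential _ hrne
        rw [Submodule.ne_bot_iff] at this
        obtain ⟨x, ⟨hxd, ⟨s₀, hs₀⟩⟩, hx0⟩ := this
        have hs₀ne : s₀ ≠ 0 := by
          intro h; apply hx0; rw [← hs₀, h]; simp
        have hcom : Submodule.comap i (LinearMap.range d) = ⊤ := by
          rcases eq_bot_or_eq_top (Submodule.comap i (LinearMap.range d)) with h | h
          · exfalso
            have : s₀ ∈ Submodule.comap i (LinearMap.range d) := by
              simpa using hs₀ ▸ hxd
            rw [h] at this
            exact hs₀ne ((Submodule.mem_bot A).mp this)
          · exact h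
        intro s
        have : s ∈ Submodule.comap i (LinearMap.range d) := by rw [hcom]; trivial
        simpa using this
      -- projectivity: lift id_S through the surjection comap d (range i) → S
      let M := Submodule.comap d (LinearMap.range i)
      let q : M →ₗ[A] S :=
        e.symm.toLinearMap ∘ₗ
          LinearMap.codRestrict (LinearMap.range i) (d ∘ₗ M.subtype) (fun x => x.2)
    -- characterizing property of q
      have hq : ∀ x : M, i (q x) = d (x : E) := by
        intro x
        simp only [q, LinearMap.comp_apply, LinearEquiv.coe_coe]
        rw [hie]
        rfl
      have hqsurj : Function.Surjective q := by
        intro s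
        obtain ⟨x, hx⟩ := hle s
        have hxM : x ∈ M := by
          simp only [M, Submodule.mem_comap]
          exact ⟨s, hx.symm⟩
        refine ⟨⟨x, hxM⟩, hE.inj ?_⟩
        rw [hq]
        exact hx
      obtain ⟨h, hh⟩ := Module.projective_lifting_property q LinearMap.id hqsurj
      set h' : S →ₗ[A] E := M.subtype ∘ₗ h with hh'
      have hdh : ∀ s : S, d (h' s) = i s := by
        intro s
        have : q (h s) = s := by
          have := congrArg (fun m => m s) hh
          simpa using this
        rw [hh']
        simp only [LinearMap.comp_apply, Submodule.subtype_apply]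
        rw [← hq (h s), this]
      have hrh'ne : LinearMap.range h' ≠ ⊥ := by
        intro h0
        obtain ⟨s₀, hs₀⟩ := exists_ne (0 : S)
        have : h' s₀ ∈ LinearMap.range h' := LinearMap.mem_range_self _ _
        rw [h0] at this
        have h'0 : h' s₀ = 0 := by simpa using this
        have : i s₀ = 0 := by rw [← hdh, h'0, map_zero]
        exact hs₀ (hE.inj (by rw [this, map_zero]))
      have := hE.essential _ hrh'ne
      rw [Submodule.ne_bot_iff] at this
      obtain ⟨x, ⟨⟨s₁, hs₁⟩, ⟨s₂, hs₂⟩⟩, hx0⟩ := this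
      have hdx : d x = 0 := by rw [← hs₂, hdz]
      have : i s₁ = 0 := by rw [← hdh, hs₁, hdx]
      have hs₁0 : s₁ = 0 := hE.inj (by rw [this, map_zero])
      exact hx0 (by rw [← hs₁, hs₁0, map_zero])
    have : f = g := by
      have := sub_eq_zero.mp this
      exact this
    exact this
  have hsurj : Function.Surjective φ := by
    intro g
    obtain ⟨f, hf⟩ := hE.injective_module.out i hE.inj (i ∘ₗ g)
    refine ⟨f, ?_⟩
    ext s
    apply hE.inj
    rw [hφ, hf]
    rfl
  refine ⟨RingEquiv.ofBijective
    ({ toFun := φ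
       map_one' := ?_
       map_mul' := ?_
       map_zero' := ?_
       map_add' := ?_ } : Module.End A E →+* Module.End A S) ⟨hinj, hsurj⟩⟩
  · ext s; apply hE.inj; rw [hφ]; rfl
  · intro f g; ext s; apply hE.inj
    symm
    rw [Module.End.mul_apply, hφ, hφ, hφ, Module.End.mul_apply]
  · ext s; apply hE.inj; rw [hφ]; simp
  · intro f g; ext s; apply hE.inj
    show i (φ (f + g) s) = i ((φ f + φ g) s)
    symm
    rw [LinearMap.add_apply, map_add, hφ, hφ, hφ, LinearMap.add_apply]

/-- Over a basic artin algebra `A`, if `S` is a simple projective module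
with injective envelope `E`, then `End_A(E) ≅ End_A(S)`. -/
theorem end_injective_envelope_of_simple_projective
    (R A : Type) [CommRing R] [IsArtinianRing R] [Ring A] [Algebra R A] [Module.Finite R A]
    (hbasic : IsBasicAlgebra A)
    (S : Type) [AddCommGroup S] [Module A S]
    (hS : IsSimpleModule A S) (hSproj : Module.Projective A S)
    (E : Type) [AddCommGroup E] [Module A E]
    (i : S →ₗ[A] E) (hE : IsInjectiveEnvelope A i) :
    Nonempty ((Module.End A E) ≃+* (Module.End A S)) :=
  aux_end_equiv A S hS hSproj E i hE
end

section
/- Let A be a basic artin algebra and S, S' nonisomorphic simple projective A-modules. Then End_A(I₀(S ⊕ S')) is isomorphic to the product ring End_A(I₀(S)) × End_A(I₀(S')). -/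
open MulOpposite

section Aux

variable {A : Type} [Ring A]

lemma myInjective_of_equiv {M N : Type} [AddCommGroup M] [Module A M]
    [AddCommGroup N] [Module A N] (e : M ≃ₗ[A] N) (h : Module.Injective A M) :
    Module.Injective A N := by
  constructor
  intro X Y _ _ _ _ f hf g
  obtain ⟨h', hh'⟩ := h.out f hf (e.symm.toLinearMap ∘ₗ g)
  refine ⟨e.toLinearMap ∘ₗ h', fun x => ?_⟩
  have := hh' x
  simp only [LinearMap.comp_apply, LinearEquiv.coe_coe] at this ⊢
  rw [this, LinearEquiv.apply_symm_apply]

lemma myInjective_prod {M N : Type} [AddCommGroup M] [Module A M]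
    [AddCommGroup N] [Module A N] (hM : Module.Injective A M) (hN : Module.Injective A N) :
    Module.Injective A (M × N) := by
  constructor
  intro X Y _ _ _ _ f hf g
  obtain ⟨h₁, hh₁⟩ := hM.out f hf (LinearMap.fst A M N ∘ₗ g)
  obtain ⟨h₂, hh₂⟩ := hN.out f hf (LinearMap.snd A M N ∘ₗ g)
  refine ⟨h₁.prod h₂, fun x => ?_⟩
  have e1 := hh₁ x
  have e2 := hh₂ x
  simp only [LinearMap.comp_apply, LinearMap.fst_apply, LinearMap.snd_apply] at e1 e2
  exact Prod.ext (by simpa [LinearMap.prod_apply] using e1) (by simpa [LinearMap.prod_apply] using e2)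

lemma range_isAtom {S M : Type} [AddCommGroup S] [Module A S] [AddCommGroup M] [Module A M]
    (hS : IsSimpleModule A S) (i : S →ₗ[A] M) (hi : Function.Injective i) :
    IsAtom (LinearMap.range i) := by
  rw [← isSimpleModule_iff_isAtom]
  haveI := hS
  exact IsSimpleModule.congr (LinearEquiv.ofInjective i hi).symm

/-- Cross-homs between injective envelopes of nonisomorphic simple projectives vanish
(using projectivity of the simple socle of the target). -/
lemma hom_env_zero {S S' E E' : Type} [AddCommGroup S] [Module A S] [AddCommGroup S'] [Module A S']
    [AddCommGroup E] [Module A E] [AddCommGroup E'] [Module A E']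
    (hS : IsSimpleModule A S) (hS' : IsSimpleModule A S') (hS'proj : Module.Projective A S')
    (hniso : IsEmpty (S ≃ₗ[A] S'))
    (i : S →ₗ[A] E) (hE : IsInjectiveEnvelope A i)
    (i' : S' →ₗ[A] E') (hE' : IsInjectiveEnvelope A i')
    (f : E →ₗ[A] E') : f = 0 := by
  by_contra hf
  have hrange : LinearMap.range f ≠ ⊥ := by
    simpa [LinearMap.range_eq_bot] using hf
  have hatom' : IsAtom (LinearMap.range i') := range_isAtom hS' i' hE'.inj
  have hne := hE'.essential _ hrange
  have hinf : LinearMap.range f ⊓ LinearMap.range i' = LinearMap.range i' :=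
    (hatom'.le_iff_eq hne).mp inf_le_right
  have h1 : LinearMap.range i' ≤ LinearMap.range f := by
    rw [← hinf]; exact inf_le_left
  set E₀ : Submodule A E := Submodule.comap f (LinearMap.range i') with hE₀
  have hrestrict : ∀ x ∈ E₀, f x ∈ LinearMap.range i' := fun x hx => hx
  set fr : E₀ →ₗ[A] ↥(LinearMap.range i') := f.restrict hrestrict with hfr
  have hfrsurj : Function.Surjective fr := by
    rintro ⟨y, hy⟩
    obtain ⟨x, hx⟩ := h1 hy
    refine ⟨⟨x, by simp [hE₀, Submodule.mem_comap, hx, hy]⟩, ?_⟩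
    apply Subtype.ext
    simpa [hfr, LinearMap.restrict_apply] using hx
  set e' : S' ≃ₗ[A] ↥(LinearMap.range i') := LinearEquiv.ofInjective i' hE'.inj with he'
  set p : E₀ →ₗ[A] S' := e'.symm.toLinearMap ∘ₗ fr with hp
  have hpsurj : Function.Surjective p := by
    intro s; obtain ⟨x, hx⟩ := hfrsurj (e' s)
    exact ⟨x, by simp [hp, hx]⟩
  haveI := hS'proj
  obtain ⟨h, hh⟩ := Module.projective_lifting_property p LinearMap.id hpsurj
  have hhinj : Function.Injective h :=
    Function.LeftInverse.injective (g := p) (fun x => LinearMap.congr_fun hh x)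
  set g : S' →ₗ[A] E := E₀.subtype ∘ₗ h with hg
  have hginj : Function.Injective g := (Submodule.injective_subtype E₀).comp hhinj
  haveI := hS'
  haveI : Nontrivial S' := IsSimpleModule.nontrivial A S'
  have hgne : LinearMap.range g ≠ ⊥ := by
    rw [Ne, LinearMap.range_eq_bot]
    intro h0
    obtain ⟨s, hs⟩ := exists_ne (0 : S')
    exact hs (hginj (by rw [h0]; simp))
  have hatomg : IsAtom (LinearMap.range g) := range_isAtom hS' g hginj
  have hatomi : IsAtom (LinearMap.range i) := range_isAtom hS i hE.inj
  have hne2 := hE.essential _ hgne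
  have e1 : LinearMap.range g ⊓ LinearMap.range i = LinearMap.range g :=
    (hatomg.le_iff_eq hne2).mp inf_le_left
  have e2 : LinearMap.range g ⊓ LinearMap.range i = LinearMap.range i := by
    refine (hatomi.le_iff_eq ?_).mp inf_le_right
    rw [e1]; exact hgne
  have heq : LinearMap.range i = LinearMap.range g := by rw [← e1, e2]
  exact hniso.false (((LinearEquiv.ofInjective i hE.inj).trans
    (LinearEquiv.ofEq _ _ heq)).trans (LinearEquiv.ofInjective g hginj).symm)

lemma essential_prodMap {S S' E E' : Type} [AddCommGroup S] [Module A S] [AddCommGroup S']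
    [Module A S'] [AddCommGroup E] [Module A E] [AddCommGroup E'] [Module A E']
    (i : S →ₗ[A] E) (i' : S' →ₗ[A] E')
    (hi : ∀ N : Submodule A E, N ≠ ⊥ → N ⊓ LinearMap.range i ≠ ⊥)
    (hi' : ∀ N : Submodule A E', N ≠ ⊥ → N ⊓ LinearMap.range i' ≠ ⊥) :
    ∀ N : Submodule A (E × E'), N ≠ ⊥ → N ⊓ LinearMap.range (i.prodMap i') ≠ ⊥ := by
  have hmem : ∀ u : E, ∀ v : E', u ∈ LinearMap.range i → v ∈ LinearMap.range i' →
      (u, v) ∈ LinearMap.range (i.prodMap i') := by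
    rintro u v ⟨s, rfl⟩ ⟨s', rfl⟩
    exact ⟨(s, s'), rfl⟩
  have key : ∀ (M : Type) (_ : AddCommGroup M) (_ : Module A M) (K : Submodule A M),
      (∀ N : Submodule A M, N ≠ ⊥ → N ⊓ K ≠ ⊥) →
      ∀ x : M, x ≠ 0 → ∃ a : A, a • x ∈ K ∧ a • x ≠ 0 := by
    intro M _ _ K hk x hx
    have hsp : (A ∙ x) ≠ ⊥ := by
      rw [Ne, Submodule.span_singleton_eq_bot]; exact hx
    obtain ⟨z, hz, hz0⟩ := Submodule.ne_bot_iff _ |>.mp (hk _ hsp)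
    rw [Submodule.mem_inf] at hz
    obtain ⟨a, ha⟩ := Submodule.mem_span_singleton.mp hz.1
    exact ⟨a, by rw [ha]; exact hz.2, by rw [ha]; exact hz0⟩
  intro N hN
  rw [Submodule.ne_bot_iff]
  obtain ⟨⟨x, y⟩, hxyN, hxy0⟩ := Submodule.ne_bot_iff _ |>.mp hN
  by_cases hy : y = 0
  · have hx : x ≠ 0 := by rintro rfl; exact hxy0 (by simp [hy])
    obtain ⟨a, haR, ha0⟩ := key E _ _ (LinearMap.range i) hi x hx
    refine ⟨a • (x, y), Submodule.mem_inf.mpr ⟨N.smul_mem a hxyN, ?_⟩, ?_⟩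
    · rw [Prod.smul_mk, hy, smul_zero]
      exact hmem _ _ haR (Submodule.zero_mem _)
    · rw [Prod.smul_mk]
      intro h0
      exact ha0 (congrArg Prod.fst h0)
  · obtain ⟨a, haR, ha0⟩ := key E' _ _ (LinearMap.range i') hi' y hy
    by_cases hax : a • x = 0
    · refine ⟨a • (x, y), Submodule.mem_inf.mpr ⟨N.smul_mem a hxyN, ?_⟩, ?_⟩
      · rw [Prod.smul_mk, hax]
        exact hmem _ _ (Submodule.zero_mem _) haR
      · rw [Prod.smul_mk]
        intro h0
        exact ha0 (congrArg Prod.snd h0)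
    · obtain ⟨b, hbR, hb0⟩ := key E _ _ (LinearMap.range i) hi (a • x) hax
      refine ⟨b • a • (x, y), Submodule.mem_inf.mpr
        ⟨N.smul_mem b (N.smul_mem a hxyN), ?_⟩, ?_⟩
      · rw [Prod.smul_mk, Prod.smul_mk]
        exact hmem _ _ hbR ((LinearMap.range i').smul_mem b haR)
      · rw [Prod.smul_mk, Prod.smul_mk]
        intro h0
        exact hb0 (congrArg Prod.fst h0)

/-- Ring isomorphism `End (M × N) ≃ End M × End N` when cross-homs vanish. -/
noncomputable def endProdEquiv {M N : Type} [AddCommGroup M] [Module A M]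
    [AddCommGroup N] [Module A N]
    (h1 : ∀ f : M →ₗ[A] N, f = 0) (h2 : ∀ f : N →ₗ[A] M, f = 0) :
    Module.End A (M × N) ≃+* Module.End A M × Module.End A N where
  toFun f := ⟨LinearMap.fst A M N ∘ₗ f ∘ₗ LinearMap.inl A M N,
              LinearMap.snd A M N ∘ₗ f ∘ₗ LinearMap.inr A M N⟩
  invFun p := p.1.prodMap p.2
  left_inv f := by
    have c1 : ∀ x : M, (f (x, 0)).2 = 0 := fun x =>
      LinearMap.congr_fun (h1 (LinearMap.snd A M N ∘ₗ f ∘ₗ LinearMap.inl A M N)) x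
    have c2 : ∀ y : N, (f (0, y)).1 = 0 := fun y =>
      LinearMap.congr_fun (h2 (LinearMap.fst A M N ∘ₗ f ∘ₗ LinearMap.inr A M N)) y
    apply LinearMap.ext
    rintro ⟨x, y⟩
    have hsplit : f (x, y) = f (x, 0) + f (0, y) := by
      rw [← map_add]; simp
    simp only [LinearMap.prodMap_apply, LinearMap.comp_apply, LinearMap.inl_apply,
      LinearMap.inr_apply, LinearMap.fst_apply, LinearMap.snd_apply]
    rw [hsplit]
    exact Prod.ext (by simp [c2 y]) (by simp [c1 x])
  right_inv p := by
    refine Prod.ext ?_ ?_ <;> apply LinearMap.ext <;> intro x <;>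
      simp [LinearMap.prodMap_apply]
  map_add' f g := by
    refine Prod.ext ?_ ?_ <;> apply LinearMap.ext <;> intro x <;>
      simp [LinearMap.add_apply, Prod.fst_add, Prod.snd_add]
  map_mul' f g := by
    have c1 : ∀ x : M, (g (x, 0)).2 = 0 := fun x =>
      LinearMap.congr_fun (h1 (LinearMap.snd A M N ∘ₗ g ∘ₗ LinearMap.inl A M N)) x
    have c2 : ∀ y : N, (g (0, y)).1 = 0 := fun y =>
      LinearMap.congr_fun (h2 (LinearMap.fst A M N ∘ₗ g ∘ₗ LinearMap.inr A M N)) y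
    refine Prod.ext ?_ ?_ <;> apply LinearMap.ext <;> intro x <;>
      simp only [Module.End.mul_apply, LinearMap.comp_apply, LinearMap.inl_apply,
        LinearMap.inr_apply, LinearMap.fst_apply, LinearMap.snd_apply, Prod.fst_mul,
        Prod.snd_mul]
    · have : g (x, 0) = ((g (x, 0)).1, 0) := Prod.ext rfl (c1 x)
      rw [this]
    · have : g (0, x) = (0, (g (0, x)).2) := Prod.ext (c2 x) rfl
      rw [this]

/-- Conjugation by a linear equivalence gives a ring isomorphism of endomorphism rings. -/
noncomputable def endCongr {M N : Type} [AddCommGroup M] [Module A M]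
    [AddCommGroup N] [Module A N] (e : M ≃ₗ[A] N) :
    Module.End A M ≃+* Module.End A N where
  toFun f := e.toLinearMap ∘ₗ f ∘ₗ e.symm.toLinearMap
  invFun g := e.symm.toLinearMap ∘ₗ g ∘ₗ e.toLinearMap
  left_inv f := by apply LinearMap.ext; intro x; simp
  right_inv g := by apply LinearMap.ext; intro x; simp
  map_add' f g := by apply LinearMap.ext; intro x; simp
  map_mul' f g := by
    apply LinearMap.ext; intro x
    simp [Module.End.mul_apply]

end Aux

/-- Over a basic artin algebra `A`, if `S`, `S'` are nonisomorphic simple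
projective modules, then `End_A(I₀(S ⊕ S')) ≅ End_A(I₀(S)) × End_A(I₀(S'))`. -/
theorem end_injective_envelope_of_sum_of_simple_projectives
    (R A : Type) [CommRing R] [IsArtinianRing R] [Ring A] [Algebra R A] [Module.Finite R A]
    (hbasic : IsBasicAlgebra A)
    (S S' : Type) [AddCommGroup S] [Module A S] [AddCommGroup S'] [Module A S']
    (hS : IsSimpleModule A S) (hSproj : Module.Projective A S)
    (hS' : IsSimpleModule A S') (hS'proj : Module.Projective A S')
    (hniso : IsEmpty (S ≃ₗ[A] S'))
    (E : Type) [AddCommGroup E] [Module A E] (i : S →ₗ[A] E) (hE : IsInjectiveEnvelope A i)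
    (E' : Type) [AddCommGroup E'] [Module A E'] (i' : S' →ₗ[A] E') (hE' : IsInjectiveEnvelope A i')
    (F : Type) [AddCommGroup F] [Module A F] (j : (S × S') →ₗ[A] F)
    (hF : IsInjectiveEnvelope A j) :
    Nonempty ((Module.End A F) ≃+* ((Module.End A E) × (Module.End A E'))) := by
  classical
  have hniso' : IsEmpty (S' ≃ₗ[A] S) := ⟨fun e => hniso.false e.symm⟩
  have h1 : ∀ f : E →ₗ[A] E', f = 0 := fun f =>
    hom_env_zero hS hS' hS'proj hniso i hE i' hE' f
  have h2 : ∀ f : E' →ₗ[A] E, f = 0 := fun f =>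
    hom_env_zero hS' hS hSproj hniso' i' hE' i hE f
  have hinjEE' : Module.Injective A (E × E') :=
    myInjective_prod hE.injective_module hE'.injective_module
  obtain ⟨φ, hφ⟩ := hinjEE'.out j hF.inj (i.prodMap i')
  have hφinj : Function.Injective φ := by
    rw [← LinearMap.ker_eq_bot]
    by_contra hk
    refine hF.essential _ hk ?_
    rw [eq_bot_iff]
    rintro z hz
    rw [Submodule.mem_inf] at hz
    obtain ⟨hz1, s, rfl⟩ := hz
    have h0 : (i.prodMap i') s = 0 := by rw [← hφ s]; exact hz1
    rw [LinearMap.prodMap_apply] at h0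
    have hs1 : s.1 = 0 := hE.inj (by simpa using congrArg Prod.fst h0)
    have hs2 : s.2 = 0 := hE'.inj (by simpa using congrArg Prod.snd h0)
    have : s = 0 := Prod.ext hs1 hs2
    rw [this, map_zero]
    exact Submodule.zero_mem ⊥
  have hrφ : Module.Injective A ↥(LinearMap.range φ) :=
    myInjective_of_equiv (LinearEquiv.ofInjective φ hφinj) hF.injective_module
  obtain ⟨r, hr⟩ := hrφ.out (LinearMap.range φ).subtype
    (Submodule.injective_subtype _) LinearMap.id
  have hker : LinearMap.ker r = ⊥ := by
    by_contra hk
    refine essential_prodMap i i' hE.essential hE'.essential _ hk ?_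
    rw [eq_bot_iff]
    rintro z hz
    rw [Submodule.mem_inf] at hz
    obtain ⟨hz1, s, rfl⟩ := hz
    have hzr : (i.prodMap i') s ∈ LinearMap.range φ := ⟨j s, hφ s⟩
    have hrz : r ((i.prodMap i') s) = ⟨(i.prodMap i') s, hzr⟩ := by
      simpa using hr ⟨(i.prodMap i') s, hzr⟩
    have hz0 : (⟨(i.prodMap i') s, hzr⟩ : ↥(LinearMap.range φ)) = 0 := by
      rw [← hrz]; exact hz1
    have : (i.prodMap i') s = 0 := congrArg Subtype.val hz0
    rw [this]
    exact Submodule.zero_mem ⊥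
  have hsurj : Function.Surjective φ := by
    intro z
    have hrr : r ((r z : ↥(LinearMap.range φ)) : E × E') = r z := by
      simpa using hr (r z)
    have hmem0 : z - ((r z : ↥(LinearMap.range φ)) : E × E') ∈ LinearMap.ker r := by
      rw [LinearMap.mem_ker, map_sub, hrr, sub_self]
    rw [hker, Submodule.mem_bot, sub_eq_zero] at hmem0
    obtain ⟨w, hw⟩ := (r z).2
    exact ⟨w, by rw [hw, ← hmem0]⟩
  exact ⟨(endCongr (LinearEquiv.ofBijective φ ⟨hφinj, hsurj⟩)).trans (endProdEquiv h1 h2)⟩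
end
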